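/- arXiv:2101.12288 — 6 statements merged into one kernel-verified Lean document; each statement's English description precedes it below -/
import Mathlib

section
/- Let P = {p_1 ≤ p_2 ≤ ... ≤ p_N} and Q = {q_1, ..., q_N} be two finite sequences of real numbers. Define d_i = |p_i - q_i|, ε = max_i d_i, and δ = Σ_i d_i. Then there exists a set R ⊂ ℝ and a map π : P ∪ Q → R sending each point to its nearest element of R (rounding up at midpoints) such that (1) π(p_i) = π(q_i) for all i, and (2) |π(x) - x| ≤ 3ε + 4δ for all x ∈ P ∪ Q. -/
/-!
Round to the grid `c + 2δℤ`. The intervals between `p_i` and `q_i` have total length `δ < 2δ`,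
so some translate of the grid has none of its half-way points in any of them: then `p_i` and
`q_i` round to the same grid point, and no point moves by more than `δ`. If `δ = 0` then `P = Q`
and the identity map onto `R = ℝ` works.
-/

open Set MeasureTheory
open scoped Pointwise

theorem Int.floor_eq_floor_of_forall_notMem_uIcc {α : Type*} [Ring α] [LinearOrder α]
    [FloorRing α] {a b : α} (h : ∀ n : ℤ, (n : α) ∉ uIcc a b) :
    ⌊a⌋ = ⌊b⌋ := by
  wlog hab : a ≤ b generalizing a b
  · exact (this (by simpa only [uIcc_comm] using h) (le_of_not_ge hab)).symm
  have hlt : (⌊b⌋ : α) < a := by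
    by_contra! hle
    exact h ⌊b⌋ (mem_uIcc_of_le hle (Int.floor_le b))
  exact le_antisymm (Int.floor_mono hab) (Int.le_floor.2 hlt.le)

theorem le_round_of_abs_sub_eq {α : Type*} [Field α] [LinearOrder α] [IsStrictOrderedRing α]
    [FloorRing α] {x : α} {z : ℤ} (h : |x - z| = |x - round x|) : z ≤ round x := by
  by_contra! hlt
  have hz : x + 1 / 2 < z := by
    have := Int.lt_floor_add_one (x + 1 / 2)
    rw [← round_eq] at this
    exact this.trans_le (by exact_mod_cast hlt)
  have := abs_sub_round x
  rw [← h, abs_of_neg (by linarith)] at this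
  linarith

/-- Rounding to the nearest point of the grid `c + s ℤ`, half-way points going up. -/
noncomputable def gridRound (c s x : ℝ) : ℝ := c + s * round ((x - c) / s)

section GridRound

variable {c s : ℝ}

theorem gridRound_mem_range (c s x : ℝ) : gridRound c s x ∈ range fun n : ℤ => c + s * n :=
  ⟨_, rfl⟩

theorem abs_add_mul_sub (hs : 0 < s) (x z : ℝ) :
    |c + s * z - x| = s * |(x - c) / s - z| := by
  rw [← abs_of_pos hs, ← abs_mul, abs_of_pos hs, abs_sub_comm]
  congr 1
  field_simp
  ring

theorem abs_gridRound_sub_le (hs : 0 < s) (x : ℝ) (n : ℤ) :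
    |gridRound c s x - x| ≤ |c + s * n - x| := by
  rw [gridRound, abs_add_mul_sub hs, abs_add_mul_sub hs]
  exact mul_le_mul_of_nonneg_left (round_le _ n) hs.le

theorem le_gridRound_of_abs_sub_eq (hs : 0 < s) {x : ℝ} {n : ℤ}
    (h : |c + s * n - x| = |gridRound c s x - x|) : c + s * n ≤ gridRound c s x := by
  rw [gridRound, abs_add_mul_sub hs, abs_add_mul_sub hs, mul_right_inj' hs.ne'] at h
  have := le_round_of_abs_sub_eq h
  unfold gridRound
  gcongr

theorem abs_gridRound_sub_le_half (hs : 0 < s) (x : ℝ) : |gridRound c s x - x| ≤ s / 2 := by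
  rw [gridRound, abs_add_mul_sub hs]
  linarith [mul_le_mul_of_nonneg_left (abs_sub_round ((x - c) / s)) hs.le]

theorem gridRound_eq_of_forall_notMem_uIcc (hs : 0 < s) {p q : ℝ}
    (h : ∀ n : ℤ, c + s * (n - 1 / 2) ∉ uIcc p q) : gridRound c s p = gridRound c s q := by
  unfold gridRound
  rw [round_eq, round_eq, Int.floor_eq_floor_of_forall_notMem_uIcc]
  intro n hn
  have hmono : Monotone fun y : ℝ => c + s * (y - 1 / 2) := fun y y' hy => by
    dsimp only; gcongr
  have hinv : ∀ y, c + s * ((y - c) / s + 1 / 2 - 1 / 2) = y := fun y => by field_simp; ring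
  have := hmono.image_uIcc_subset ⟨n, hn, rfl⟩
  simp only [hinv] at this
  exact h n this

end GridRound

theorem volume_iUnion_uIcc_le {ι : Type*} [Fintype ι] (a b : ι → ℝ) :
    volume (⋃ i, uIcc (a i) (b i)) ≤ ENNReal.ofReal (∑ i, |a i - b i|) :=
  calc volume (⋃ i, uIcc (a i) (b i)) ≤ ∑ i, volume (uIcc (a i) (b i)) :=
        measure_iUnion_fintype_le _ _
    _ = ∑ i, ENNReal.ofReal |a i - b i| := by simp only [Real.volume_interval, abs_sub_comm]
    _ = ENNReal.ofReal (∑ i, |a i - b i|) :=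
        (ENNReal.ofReal_sum_of_nonneg fun i _ => abs_nonneg _).symm

theorem exists_forall_add_mul_notMem {S : Set ℝ} {T : ℝ} (hT : 0 < T)
    (hS : volume S < ENNReal.ofReal T) : ∃ x, ∀ n : ℤ, x + T * n ∉ S := by
  have hF := isAddFundamentalDomain_Ioc hT 0
  -- the pieces `(g +ᵥ S) ∩ (0, T]` are translates of a partition of `S`
  have hlt : volume (⋃ g : AddSubgroup.zmultiples T, (g +ᵥ S) ∩ Ioc 0 (0 + T)) <
      volume (Ioc 0 (0 + T)) :=
    calc _ ≤ ∑' g : AddSubgroup.zmultiples T, volume ((g +ᵥ S) ∩ Ioc 0 (0 + T)) :=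
          measure_iUnion_le _
      _ = volume S := (hF.measure_eq_tsum S).symm
      _ < volume (Ioc 0 (0 + T)) := by simpa using hS
  obtain ⟨x, -, hx⟩ :
      (Ioc 0 (0 + T) \ ⋃ g : AddSubgroup.zmultiples T, (g +ᵥ S)).Nonempty := by
    rw [sdiff_nonempty]
    intro hsub
    refine hlt.not_ge (measure_mono fun y hy => ?_)
    rw [← iUnion_inter]
    exact ⟨hsub hy, hy⟩
  refine ⟨x, fun n hn => hx (mem_iUnion.2 ⟨⟨-n • T, -n, rfl⟩, x + T * n, hn, ?_⟩)⟩
  change -n • T + (x + T * n) = x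
  rw [zsmul_eq_mul]
  push_cast
  ring

theorem rounding_lemma_general (N : ℕ) (hN : 0 < N) (P Q : Fin N → ℝ)
    (ε δ : ℝ)
    (hε : ε = Finset.univ.sup' ⟨⟨0, hN⟩, Finset.mem_univ _⟩ (fun i => |P i - Q i|))
    (hδ : δ = ∑ i, |P i - Q i|) :
    ∃ (R : Set ℝ) (π : ℝ → ℝ),
      (∀ x ∈ Set.range P ∪ Set.range Q,
        π x ∈ R ∧
        (∀ r ∈ R, |π x - x| ≤ |r - x|) ∧
        (∀ r ∈ R, |r - x| = |π x - x| → r ≤ π x) ∧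
        |π x - x| ≤ 3 * ε + 4 * δ) ∧
      (∀ i, π (P i) = π (Q i)) := by
  have hε0 : 0 ≤ ε := hε ▸
    (abs_nonneg _).trans (Finset.le_sup' (fun i => |P i - Q i|) (Finset.mem_univ ⟨0, hN⟩))
  have hδ0 : 0 ≤ δ := hδ ▸ Finset.sum_nonneg fun i _ => abs_nonneg _
  rcases hδ0.eq_or_lt with hδ_eq | hδ_pos
  · have hPQ : ∀ i, P i = Q i := fun i => sub_eq_zero.1 <| abs_eq_zero.1 <|
      (Finset.sum_eq_zero_iff_of_nonneg fun i _ => abs_nonneg _).1 (hδ ▸ hδ_eq.symm) i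
        (Finset.mem_univ i)
    refine ⟨univ, id, fun x _ => ⟨trivial, fun r _ => ?_, fun r _ h => ?_, ?_⟩, hPQ⟩
    · rw [id, sub_self, abs_zero]
      exact abs_nonneg _
    · rw [id, sub_self, abs_zero, abs_eq_zero, sub_eq_zero] at h
      exact h.le
    · rw [id, sub_self, abs_zero]
      positivity
  · have hvol : volume (⋃ i, uIcc (P i) (Q i)) < ENNReal.ofReal (2 * δ) :=
      (volume_iUnion_uIcc_le P Q).trans_lt <| by
        rw [← hδ]; exact ENNReal.ofReal_lt_ofReal_iff'.2 ⟨by linarith, by linarith⟩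
    -- `x₀ + 2δℤ` are the half-way points of the grid `x₀ + δ + 2δℤ`
    obtain ⟨x₀, hx₀⟩ := exists_forall_add_mul_notMem (by positivity) hvol
    refine ⟨range fun n : ℤ => x₀ + δ + 2 * δ * n, gridRound (x₀ + δ) (2 * δ),
      fun x _ => ⟨gridRound_mem_range _ _ x, ?_, ?_, ?_⟩, fun i => ?_⟩
    · rintro _ ⟨n, rfl⟩
      exact abs_gridRound_sub_le (by positivity) x n
    · rintro _ ⟨n, rfl⟩
      exact le_gridRound_of_abs_sub_eq (by positivity)
    · linarith [abs_gridRound_sub_le_half (c := x₀ + δ) (by positivity : 0 < 2 * δ) x]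
    · refine gridRound_eq_of_forall_notMem_uIcc (by positivity) fun n hn =>
        hx₀ n (mem_iUnion.2 ⟨i, ?_⟩)
      convert hn using 1
      ring

/-- **Rounding Lemma.** Given two finite sequences `P` (nondecreasing) and `Q` of `N`
reals, with `ε = max_i |p_i - q_i|` and `δ = Σ_i |p_i - q_i|`, there is a set `R ⊆ ℝ`
and a map `π` sending each point of `P ∪ Q` to its unique nearest element of `R`
(rounding up at midpoints) with `π (p i) = π (q i)` for all `i` and
`|π x - x| ≤ 3ε + 4δ` on `P ∪ Q`. -/
theorem rounding_lemma (N : ℕ) (hN : 0 < N) (P Q : Fin N → ℝ) (hP : Monotone P)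
    (ε δ : ℝ)
    (hε : ε = Finset.univ.sup' ⟨⟨0, hN⟩, Finset.mem_univ _⟩ (fun i => |P i - Q i|))
    (hδ : δ = ∑ i, |P i - Q i|) :
    ∃ (R : Set ℝ) (π : ℝ → ℝ),
      (∀ x ∈ Set.range P ∪ Set.range Q,
        π x ∈ R ∧
        (∀ r ∈ R, |π x - x| ≤ |r - x|) ∧
        (∀ r ∈ R, |r - x| = |π x - x| → r ≤ π x) ∧
        |π x - x| ≤ 3 * ε + 4 * δ) ∧
      (∀ i, π (P i) = π (Q i)) :=
  rounding_lemma_general N hN P Q ε δ hε hδ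
end

section
/- Let X be a set of size n, and choose M subsets S_1, ..., S_M of X, each of size k, independently and uniformly at random (each S_i uniform over all k-element subsets). Let p ≤ k, and let A be the event that every p-element subset of X is contained in at least one S_i. Then P(A) ≥ 1 - C(n,p) · (1 - ((k-p+1)/(n-p+1))^p)^M. -/
/-!
Union bound over the `C(n,p)` sets `T` of size `p`. A uniform `k`-set contains a fixed `T` with
probability `C(n-p,k-p) / C(n,k) = ∏_{i<p} (k-i)/(n-i) ≥ ((k-p+1)/(n-p+1))^p`, so the `M`
independent sets all miss `T` with probability at most `(1 - ((k-p+1)/(n-p+1))^p)^M`.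
-/

open scoped Classical

open Finset

theorem card_filter_superset_powersetCard {α : Type*} [DecidableEq α] {s T : Finset α} {k : ℕ}
    (hTs : T ⊆ s) (hTk : #T ≤ k) :
    #{S ∈ s.powersetCard k | T ⊆ S} = (#s - #T).choose (k - #T) := by
  rw [← card_sdiff_of_subset hTs, ← card_powersetCard]
  refine card_bij' (fun S _ ↦ S \ T) (fun U _ ↦ U ∪ T) ?_ ?_ ?_ ?_
  · intro S hS
    simp only [mem_filter, mem_powersetCard] at hS ⊢
    exact ⟨sdiff_subset_sdiff hS.1.1 le_rfl, by rw [card_sdiff_of_subset hS.2, hS.1.2]⟩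
  · intro U hU
    simp only [mem_powersetCard, subset_sdiff] at hU
    simp only [mem_filter, mem_powersetCard]
    refine ⟨⟨union_subset hU.1.1 hTs, ?_⟩, subset_union_right⟩
    rw [card_union_of_disjoint hU.1.2, hU.2]
    omega
  · intro S hS
    exact sdiff_union_of_subset (mem_filter.1 hS).2
  · intro U hU
    exact union_sdiff_cancel_right (subset_sdiff.1 (mem_powersetCard.1 hU).1).2

theorem card_subtype_superset {X : Type*} [Fintype X] {k : ℕ} {T : Finset X} (hT : #T ≤ k) :
    Fintype.card {S : {S : Finset X // #S = k} // T ⊆ S.1} =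
      (Fintype.card X - #T).choose (k - #T) := by
  rw [Fintype.card_congr (Equiv.subtypeSubtypeEquivSubtypeInter _ _), Fintype.card_subtype,
    ← card_univ, ← card_filter_superset_powersetCard (subset_univ T) hT]
  congr 1
  ext S
  simp

theorem pow_mul_descFactorial_le {n k p : ℕ} (hpk : p ≤ k) (hkn : k ≤ n) :
    (((k : ℝ) - p + 1) / ((n : ℝ) - p + 1)) ^ p * n.descFactorial p ≤ k.descFactorial p := by
  have hpk' : (p : ℝ) ≤ k := by exact_mod_cast hpk
  have hkn' : (k : ℝ) ≤ n := by exact_mod_cast hkn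
  have hden : (0 : ℝ) < n - p + 1 := by linarith
  have hr : (0 : ℝ) ≤ (k - p + 1) / (n - p + 1) := div_nonneg (by linarith) hden.le
  rw [Nat.descFactorial_eq_prod_range, Nat.descFactorial_eq_prod_range, Nat.cast_prod,
    Nat.cast_prod, ← card_range p, ← prod_const, card_range, ← prod_mul_distrib]
  refine prod_le_prod (fun i _ ↦ by positivity) fun i hi ↦ ?_
  have hip : (i : ℝ) + 1 ≤ p := by exact_mod_cast mem_range.1 hi
  rw [Nat.cast_sub (by grind), Nat.cast_sub (by grind), div_mul_eq_mul_div, div_le_iff₀ hden]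
  -- `(k-i)(n-p+1) - (k-p+1)(n-i) = (p-1-i)(n-k)`
  nlinarith

theorem pow_mul_choose_le_choose_sub {n k p : ℕ} (hpk : p ≤ k) (hkn : k ≤ n) :
    (((k : ℝ) - p + 1) / ((n : ℝ) - p + 1)) ^ p * n.choose k ≤ (n - p).choose (k - p) := by
  have hpos : (0 : ℝ) < p.factorial * n.choose p := by
    have := Nat.choose_pos (hpk.trans hkn)
    positivity
  have hmul : (n.choose k * k.choose p : ℝ) = n.choose p * (n - p).choose (k - p) := by
    exact_mod_cast Nat.choose_mul hpk
  refine le_of_mul_le_mul_right ?_ hpos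
  calc _ = n.choose k * ((((k : ℝ) - p + 1) / ((n : ℝ) - p + 1)) ^ p * n.descFactorial p) := by
        rw [Nat.descFactorial_eq_factorial_mul_choose]; push_cast; ring
    _ ≤ n.choose k * k.descFactorial p := by gcongr; exact pow_mul_descFactorial_le hpk hkn
    _ = _ := by
        rw [Nat.descFactorial_eq_factorial_mul_choose]; push_cast
        linear_combination (p.factorial : ℝ) * hmul

theorem card_not_superset_le {X : Type*} [Fintype X] {k p : ℕ} {T : Finset X} (hT : #T = p)
    (hpk : p ≤ k) (hkX : k ≤ Fintype.card X) :
    (Fintype.card {S : {S : Finset X // #S = k} // ¬ T ⊆ S.1} : ℝ) ≤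
      (1 - (((k : ℝ) - p + 1) / ((Fintype.card X : ℝ) - p + 1)) ^ p) *
        Fintype.card {S : Finset X // #S = k} := by
  have hsuper := card_subtype_superset (k := k) (hT.trans_le hpk)
  rw [hT] at hsuper
  have hle : (Fintype.card X - p).choose (k - p) ≤ (Fintype.card X).choose k := by
    rw [← hsuper, ← Fintype.card_finset_len]; exact Fintype.card_subtype_le _
  rw [Fintype.card_subtype_compl, hsuper, Fintype.card_finset_len, Nat.cast_sub hle]
  linarith [pow_mul_choose_le_choose_sub hpk hkX]

section UnionBound

variable {α ι : Type*} [Fintype α] [Fintype ι]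

theorem card_pi_forall_subtype (M : ℕ) (P : α → Prop) [DecidablePred P] :
    Fintype.card {f : Fin M → α // ∀ i, P (f i)} = Fintype.card {a // P a} ^ M := by
  rw [Fintype.card_congr (Equiv.subtypePiEquivPi (p := fun _ : Fin M ↦ P)),
    Fintype.card_fun, Fintype.card_fin]

variable (Q : ι → Prop) (P : ι → α → Prop) [DecidablePred Q] [∀ t, DecidablePred (P t)]

theorem card_not_forall_exists_le (M : ℕ) :
    Fintype.card {f : Fin M → α // ¬ ∀ t, Q t → ∃ i, P t (f i)} ≤
      ∑ t ∈ univ.filter Q, Fintype.card {a // ¬ P t a} ^ M := by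
  rw [Fintype.card_subtype]
  calc _ ≤ #((univ.filter Q).biUnion fun t ↦ {f : Fin M → α | ∀ i, ¬ P t (f i)}) := by
        refine card_le_card fun f hf ↦ ?_
        simpa using hf
    _ ≤ ∑ t ∈ univ.filter Q, #{f : Fin M → α | ∀ i, ¬ P t (f i)} := card_biUnion_le
    _ = _ := sum_congr rfl fun t _ ↦ by
        rw [← Fintype.card_subtype]; convert card_pi_forall_subtype M (¬ P t ·)

theorem one_sub_card_mul_pow_le_card_div [Nonempty α] {q : ℝ}
    (hq : ∀ t, Q t → (Fintype.card {a // ¬ P t a} : ℝ) ≤ q * Fintype.card α) (M : ℕ) :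
    1 - Fintype.card {t // Q t} * q ^ M ≤
      (Fintype.card {f : Fin M → α // ∀ t, Q t → ∃ i, P t (f i)} : ℝ) /
        Fintype.card (Fin M → α) := by
  have hbad : (Fintype.card {f : Fin M → α // ¬ ∀ t, Q t → ∃ i, P t (f i)} : ℝ) ≤
      Fintype.card {t // Q t} * (q * Fintype.card α) ^ M := by
    calc _ ≤ ∑ t ∈ univ.filter Q, (Fintype.card {a // ¬ P t a} : ℝ) ^ M := by
          exact_mod_cast card_not_forall_exists_le Q P M
      _ ≤ ∑ t ∈ univ.filter Q, (q * Fintype.card α) ^ M :=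
          sum_le_sum fun t ht ↦ pow_le_pow_left₀ (Nat.cast_nonneg _) (hq t (by simpa using ht)) M
      _ = _ := by rw [sum_const, nsmul_eq_mul, Fintype.card_subtype]
  rw [Fintype.card_subtype_compl, Nat.cast_sub (Fintype.card_subtype_le _), Fintype.card_fun,
    Fintype.card_fin, Nat.cast_pow, mul_pow] at hbad
  rw [Fintype.card_fun, Fintype.card_fin, Nat.cast_pow, le_div_iff₀ (by positivity)]
  linarith

end UnionBound

/-- Choosing `M` independent uniformly random `k`-element subsets `S₁, …, S_M` of an
`n`-element set `X`, the probability that every `p`-element subset of `X` is contained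
in some `Sᵢ` is at least `1 - C(n,p) (1 - ((k-p+1)/(n-p+1))^p)^M`. -/
theorem prob_cover (X : Type*) [Fintype X] (n k p M : ℕ)
    (hn : Fintype.card X = n) (hpk : p ≤ k) (hkn : k ≤ n) :
    ((Fintype.card {f : Fin M → {S : Finset X // S.card = k} //
        ∀ T : Finset X, T.card = p → ∃ i, T ⊆ (f i).1} : ℝ) /
      (Fintype.card (Fin M → {S : Finset X // S.card = k}) : ℝ)) ≥
      1 - (n.choose p : ℝ) *
        (1 - (((k : ℝ) - p + 1) / ((n : ℝ) - p + 1)) ^ p) ^ M := by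
  subst hn
  have : Nonempty {S : Finset X // S.card = k} :=
    Fintype.card_pos_iff.1 (by simpa using Nat.choose_pos hkn)
  have hbound := one_sub_card_mul_pow_le_card_div (α := {S : Finset X // S.card = k})
    (fun T : Finset X ↦ T.card = p) (fun T S ↦ T ⊆ S.1)
    (fun _ hT ↦ card_not_superset_le hT hpk hkn) M
  rwa [Fintype.card_finset_len] at hbound
end

section
/- Let n, k, p, M be natural numbers with p ≤ k ≤ n, and let ε ∈ (0,1). If M ≥ (p·log(ne/p) - log(1-ε)) · ((n-p+1)/(k-p+1))^p, then 1 - C(n,p)·(1 - ((k-p+1)/(n-p+1))^p)^M ≥ ε. -/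
/-- If `M ≥ (p log(ne/p) - log(1-ε)) ((n-p+1)/(k-p+1))^p` then
`1 - C(n,p)(1 - ((k-p+1)/(n-p+1))^p)^M ≥ ε`. -/
theorem sample_bound (n k p M : ℕ) (hp : 1 ≤ p) (hpk : p ≤ k) (hkn : k ≤ n)
    (ε : ℝ) (hε : ε ∈ Set.Ioo (0 : ℝ) 1)
    (hM : (M : ℝ) ≥ ((p : ℝ) * Real.log ((n : ℝ) * Real.exp 1 / p) - Real.log (1 - ε)) *
      (((n : ℝ) - p + 1) / ((k : ℝ) - p + 1)) ^ p) :
    1 - (n.choose p : ℝ) * (1 - (((k : ℝ) - p + 1) / ((n : ℝ) - p + 1)) ^ p) ^ M ≥ ε := by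
  obtain ⟨hε0, hε1⟩ := hε
  have hpn : p ≤ n := hpk.trans hkn
  have hpR : (0 : ℝ) < p := by exact_mod_cast hp
  have hnR : (0 : ℝ) < n := by exact_mod_cast (hp.trans hpn)
  set a : ℝ := (k : ℝ) - p + 1 with ha_def
  set b : ℝ := (n : ℝ) - p + 1 with hb_def
  have ha : 0 < a := by
    have : (p : ℝ) ≤ k := by exact_mod_cast hpk
    simp only [ha_def]; linarith
  have hb : 0 < b := by
    have : (p : ℝ) ≤ n := by exact_mod_cast hpn
    simp only [hb_def]; linarith
  have hab : a ≤ b := by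
    have : (k : ℝ) ≤ n := by exact_mod_cast hkn
    simp only [ha_def, hb_def]; linarith
  set r : ℝ := (a / b) ^ p with hr_def
  have hr0 : 0 < r := pow_pos (div_pos ha hb) p
  have hr1 : r ≤ 1 := pow_le_one₀ (le_of_lt (div_pos ha hb)) (div_le_one_of_le₀ hab hb.le)
  have hinv : (b / a) ^ p = r⁻¹ := by
    rw [hr_def, ← inv_pow, inv_div]
  -- from hM : r * M ≥ X where X = p log(ne/p) - log(1-ε)
  set X : ℝ := (p : ℝ) * Real.log ((n : ℝ) * Real.exp 1 / p) - Real.log (1 - ε) with hX_def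
  have hrM : X ≤ r * M := by
    have h := hM
    rw [hinv] at h
    have h2 := mul_le_mul_of_nonneg_left h hr0.le
    have h3 : r * (X * r⁻¹) = X := by
      field_simp
    rw [h3] at h2
    linarith
  -- choose bound: C(n,p) ≤ (ne/p)^p
  have hq : (0 : ℝ) < (n : ℝ) * Real.exp 1 / p :=
    div_pos (mul_pos hnR (Real.exp_pos 1)) hpR
  have hchoose : (n.choose p : ℝ) ≤ ((n : ℝ) * Real.exp 1 / p) ^ p := by
    have h1 : (n.choose p : ℝ) ≤ (n : ℝ) ^ p / (Nat.factorial p : ℝ) := by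
      exact_mod_cast Nat.choose_le_pow_div p n
    have h2 : (p : ℝ) ^ p / (Nat.factorial p : ℝ) ≤ Real.exp p := Real.pow_div_factorial_le_exp _ hpR.le p
    have hfac : (0 : ℝ) < (Nat.factorial p : ℝ) := by exact_mod_cast p.factorial_pos
    have h3 : (p : ℝ) ^ p ≤ Real.exp 1 ^ p * (Nat.factorial p : ℝ) := by
      have : Real.exp 1 ^ p = Real.exp p := by
        rw [← Real.exp_nat_mul]; ring_nf
      rw [this]
      calc (p : ℝ) ^ p = (p : ℝ) ^ p / (Nat.factorial p : ℝ) * (Nat.factorial p : ℝ) := by field_simp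
        _ ≤ Real.exp p * (Nat.factorial p : ℝ) := by
            exact mul_le_mul_of_nonneg_right h2 hfac.le
    calc (n.choose p : ℝ) ≤ (n : ℝ) ^ p / (Nat.factorial p : ℝ) := h1
      _ ≤ ((n : ℝ) * Real.exp 1 / p) ^ p := by
          rw [div_pow, mul_pow, div_le_div_iff₀ hfac (pow_pos hpR p)]
          calc (n:ℝ) ^ p * (p:ℝ) ^ p ≤ (n:ℝ) ^ p * (Real.exp 1 ^ p * (Nat.factorial p : ℝ)) :=
                mul_le_mul_of_nonneg_left h3 (pow_nonneg hnR.le p)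
            _ = (n:ℝ) ^ p * Real.exp 1 ^ p * (Nat.factorial p : ℝ) := by ring
  have hqpow : ((n : ℝ) * Real.exp 1 / p) ^ p = Real.exp ((p : ℝ) * Real.log ((n : ℝ) * Real.exp 1 / p)) := by
    rw [← Real.log_pow, Real.exp_log (pow_pos hq p)]
  -- (1-r)^M ≤ exp(-r*M)
  have h1r : (0 : ℝ) ≤ 1 - r := by linarith
  have hexp : (1 - r) ^ M ≤ Real.exp (-(r * M)) := by
    have h4 : 1 - r ≤ Real.exp (-r) := by
      have := Real.add_one_le_exp (-r); linarith
    calc (1 - r) ^ M ≤ Real.exp (-r) ^ M := pow_le_pow_left₀ h1r h4 M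
      _ = Real.exp (-(r * M)) := by
          rw [← Real.exp_nat_mul]; ring_nf
  -- combine
  have key : (n.choose p : ℝ) * (1 - r) ^ M ≤ 1 - ε := by
    calc (n.choose p : ℝ) * (1 - r) ^ M
        ≤ ((n : ℝ) * Real.exp 1 / p) ^ p * Real.exp (-(r * M)) := by
          apply mul_le_mul hchoose hexp (pow_nonneg h1r M) (pow_nonneg hq.le p)
      _ = Real.exp ((p : ℝ) * Real.log ((n : ℝ) * Real.exp 1 / p) - r * M) := by
          rw [hqpow, ← Real.exp_add]; ring_nf
      _ ≤ Real.exp (Real.log (1 - ε)) := by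
          apply Real.exp_le_exp.mpr
          simp only [hX_def] at hrM; linarith
      _ = 1 - ε := Real.exp_log (by linarith)
  linarith
end

section
/- Let X and Y be finite metric spaces and φ : X → Y a bijection. Suppose there is a subset X' ⊆ X such that X' is δ-dense in X, φ(X') is δ-dense in Y, and φ restricted to X' is an η-quasi-isometry onto φ(X'). Then the Gromov–Hausdorff distance between X and Y is at most η/2 + 2δ. -/
/-- If `φ : X → Y` is a bijection of finite metric spaces, `X' ⊆ X` is `δ`-dense in `X`,
`φ(X')` is `δ`-dense in `Y`, and `φ` restricted to `X'` is an `η`-quasi-isometry, then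
the Gromov–Hausdorff distance between `X` and `Y` is at most `η/2 + 2δ`. -/
theorem ghDist_dense_qi (X Y : Type*) [MetricSpace X] [MetricSpace Y]
    [Fintype X] [Fintype Y] [Nonempty X] [Nonempty Y]
    (φ : X ≃ Y) (X' : Set X) (δ η : ℝ)
    (hdX : ∀ x : X, ∃ a ∈ X', dist x a ≤ δ)
    (hdY : ∀ y : Y, ∃ a ∈ X', dist y (φ a) ≤ δ)
    (hqi : ∀ a ∈ X', ∀ b ∈ X', |dist a b - dist (φ a) (φ b)| ≤ η) :
    GromovHausdorff.ghDist X Y ≤ η / 2 + 2 * δ := by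
  have h := GromovHausdorff.ghDist_le_of_approx_subsets (s := X')
    (fun a : X' => φ a) (ε₁ := δ) (ε₂ := η) (ε₃ := δ)
    hdX
    (fun y => by
      obtain ⟨a, ha, h⟩ := hdY y
      exact ⟨⟨a, ha⟩, h⟩)
    (fun a b => hqi a a.2 b b.2)
  linarith
end

section
/- Let X be a finite set with a probability measure μ that can be covered by s subsets X_1, ..., X_s with μ(X_i) ≥ 1/s for each i. For each p-element collection of indices {i_1,...,i_p} ⊆ {1,...,s}, the probability that k independent μ-samples hit all of X_{i_1},...,X_{i_p} is at least the probability that k independent uniform samples from an s-element set hit p designated elements, whenever the X_{i_j} are disjoint. -/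
open scoped Classical

/-- Let `μ` (given by a weight function `w`) be a probability measure on a finite set `X`
covered by pairwise disjoint sets `X₁, …, X_s` each of measure at least `1/s`. For any
`p` designated indices, the probability that `k` independent `μ`-samples hit all of the
designated sets is at least the probability that `k` independent uniform samples from an
`s`-element set hit the `p` designated elements. -/
theorem hitting_prob_ge_uniform (X : Type*) [Fintype X] (s k p : ℕ) (hs : 1 ≤ s)
    (w : X → ℝ) (hw0 : ∀ x, 0 ≤ w x) (hw1 : ∑ x, w x = 1)
    (Xs : Fin s → Finset X)
    (hcover : ∀ x : X, ∃ i, x ∈ Xs i)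
    (hdisj : ∀ i j, i ≠ j → Disjoint (Xs i) (Xs j))
    (hmeas : ∀ i, (1 : ℝ) / s ≤ ∑ x ∈ Xs i, w x)
    (idx : Fin p → Fin s) (hidx : Function.Injective idx) :
    (∑ f ∈ Finset.univ.filter
        (fun f : Fin k → X => ∀ j : Fin p, ∃ i : Fin k, f i ∈ Xs (idx j)),
      ∏ i : Fin k, w (f i)) ≥
    ((Finset.univ.filter
        (fun g : Fin k → Fin s => ∀ j : Fin p, ∃ i : Fin k, g i = idx j)).card : ℝ) *
      ((1 : ℝ) / s) ^ k := by
  classical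
  set T := Finset.univ.filter
      (fun g : Fin k → Fin s => ∀ j : Fin p, ∃ i : Fin k, g i = idx j) with hT
  set S := Finset.univ.filter
      (fun f : Fin k → X => ∀ j : Fin p, ∃ i : Fin k, f i ∈ Xs (idx j)) with hS
  have hsub : T.biUnion (fun g => Fintype.piFinset (fun i => Xs (g i))) ⊆ S := by
    intro f hf
    simp only [Finset.mem_biUnion] at hf
    obtain ⟨g, hg, hfg⟩ := hf
    rw [hT, Finset.mem_filter] at hg
    rw [hS, Finset.mem_filter]
    refine ⟨Finset.mem_univ _, fun j => ?_⟩
    obtain ⟨i, hi⟩ := hg.2 j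
    exact ⟨i, hi ▸ (Fintype.mem_piFinset.mp hfg i)⟩
  have hdisjU : (T : Set (Fin k → Fin s)).PairwiseDisjoint
      (fun g => Fintype.piFinset (fun i => Xs (g i))) := by
    intro g₁ _ g₂ _ hne
    simp only [Function.onFun, Finset.disjoint_left]
    intro f h1 h2
    obtain ⟨i, hi⟩ := Function.ne_iff.mp hne
    exact (Finset.disjoint_left.mp (hdisj _ _ hi)
      (Fintype.mem_piFinset.mp h1 i)) (Fintype.mem_piFinset.mp h2 i)
  have key : ∑ f ∈ T.biUnion (fun g => Fintype.piFinset (fun i => Xs (g i))),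
        ∏ i : Fin k, w (f i)
      = ∑ g ∈ T, ∏ i : Fin k, ∑ x ∈ Xs (g i), w x := by
    rw [Finset.sum_biUnion hdisjU]
    exact Finset.sum_congr rfl fun g _ => (Finset.prod_univ_sum _ _).symm
  have h1 : ((T.card : ℝ) * ((1 : ℝ) / s) ^ k)
      ≤ ∑ g ∈ T, ∏ i : Fin k, ∑ x ∈ Xs (g i), w x := by
    have : ∀ g ∈ T, ((1 : ℝ) / s) ^ k ≤ ∏ i : Fin k, ∑ x ∈ Xs (g i), w x := by
      intro g _
      have := Finset.prod_le_prod (s := (Finset.univ : Finset (Fin k))) (f := fun _ : Fin k => (1 : ℝ) / s)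
        (g := fun i : Fin k => ∑ x ∈ Xs (g i), w x)
        (fun i _ => by positivity) (fun i _ => hmeas (g i))
      simpa using this
    calc ((T.card : ℝ) * ((1 : ℝ) / s) ^ k)
        = ∑ _g ∈ T, ((1 : ℝ) / s) ^ k := by
          rw [Finset.sum_const, nsmul_eq_mul]
      _ ≤ _ := Finset.sum_le_sum this
  have h2 : ∑ f ∈ T.biUnion (fun g => Fintype.piFinset (fun i => Xs (g i))),
        ∏ i : Fin k, w (f i) ≤ ∑ f ∈ S, ∏ i : Fin k, w (f i) :=
    Finset.sum_le_sum_of_subset_of_nonneg hsub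
      (fun f _ _ => Finset.prod_nonneg fun i _ => hw0 _)
  calc ((T.card : ℝ) * ((1 : ℝ) / s) ^ k)
      ≤ ∑ g ∈ T, ∏ i : Fin k, ∑ x ∈ Xs (g i), w x := h1
    _ = _ := key.symm
    _ ≤ _ := h2
end

section
/- Let A_1, ..., A_n and B_1, ..., B_n be finite multisets of real numbers (e.g., births and deaths of persistence diagrams), with bijections matching A_i to B_i such that the total ℓ¹ cost of all matchings is at most δ. Then there exists a set R ⊂ ℝ such that nearest-point rounding π to R satisfies π(a) = π(b) for every matched pair (a, b), and |π(x) - x| ≤ 7δ for every x in any A_i or B_i. -/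
lemma aux_floor_eq {u v : ℝ} (huv : u ≤ v)
    (h : ∀ m : ℤ, ¬(u < (m : ℝ) ∧ (m : ℝ) ≤ v)) : ⌊u⌋ = ⌊v⌋ := by
  by_contra hne
  have hlt : ⌊u⌋ < ⌊v⌋ := lt_of_le_of_ne (Int.floor_le_floor huv) hne
  refine h ⌊v⌋ ⟨?_, Int.floor_le v⟩
  have h1 : u < (⌊u⌋ : ℝ) + 1 := Int.lt_floor_add_one u
  have h2 : ((⌊u⌋ : ℤ) : ℝ) + 1 ≤ ((⌊v⌋ : ℤ) : ℝ) := by exact_mod_cast hlt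
  linarith

lemma aux_gt {v : ℝ} (h1 : -(1/2) < v) (h2 : v ≤ 1/2) {d : ℤ} (hd : 1 ≤ d) :
    |v| < |v + d| := by
  have hd' : (1 : ℝ) ≤ (d : ℝ) := by exact_mod_cast hd
  have habs : |v + (d : ℝ)| = v + d := abs_of_pos (by linarith)
  rw [habs]
  rcases abs_cases v with ⟨h, _⟩ | ⟨h, _⟩ <;> linarith

lemma aux_ge {v : ℝ} (h1 : -(1/2) < v) (h2 : v ≤ 1/2) (d : ℤ) :
    |v| ≤ |v + d| := by
  rcases lt_trichotomy d 0 with hd | hd | hd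
  · have hd' : (d : ℝ) ≤ -1 := by exact_mod_cast (by omega : d ≤ -1)
    have hge : -(v + (d : ℝ)) ≤ |v + d| := neg_le_abs _
    rcases abs_cases v with ⟨h, _⟩ | ⟨h, _⟩ <;> linarith
  · subst hd; simp
  · exact le_of_lt (aux_gt h1 h2 hd)

lemma aux_tie {v : ℝ} (h1 : -(1/2) < v) (h2 : v ≤ 1/2) {d : ℤ}
    (heq : |v + d| = |v|) : d ≤ 0 := by
  by_contra hd
  exact absurd heq (ne_of_gt (aux_gt h1 h2 (by omega)))

/-- Given families of matched finite sequences `Aᵢ, Bᵢ` of reals whose total `ℓ¹`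
matching cost is at most `δ`, there is a set `R ⊆ ℝ` such that nearest-point rounding
`π` to `R` (rounding up at midpoints) identifies every matched pair and moves no point
of any `Aᵢ` or `Bᵢ` by more than `7δ`. -/
theorem rounding_matched_families (n : ℕ) (N : Fin n → ℕ)
    (A B : (i : Fin n) → Fin (N i) → ℝ) (δ : ℝ)
    (hcost : ∑ i : Fin n, ∑ j : Fin (N i), |A i j - B i j| ≤ δ) :
    ∃ (R : Set ℝ) (π : ℝ → ℝ),
      (∀ i j, π (A i j) = π (B i j)) ∧
      (∀ x : ℝ, ((∃ i j, x = A i j) ∨ (∃ i j, x = B i j)) →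
        π x ∈ R ∧
        (∀ r ∈ R, |π x - x| ≤ |r - x|) ∧
        (∀ r ∈ R, |r - x| = |π x - x| → r ≤ π x) ∧
        |π x - x| ≤ 7 * δ) := by
  have hsum_nonneg : (0:ℝ) ≤ ∑ i : Fin n, ∑ j : Fin (N i), |A i j - B i j| := by
    positivity
  have hδ0 : 0 ≤ δ := le_trans hsum_nonneg hcost
  rcases eq_or_lt_of_le hδ0 with h0 | hδ
  · -- δ = 0 case
    have hAB : ∀ i j, A i j = B i j := by
      intro i j
      have hz : ∑ i : Fin n, ∑ j : Fin (N i), |A i j - B i j| = 0 :=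
        le_antisymm (h0 ▸ hcost) hsum_nonneg
      have h1 : ∀ i ∈ Finset.univ, ∑ j : Fin (N i), |A i j - B i j| = 0 :=
        (Finset.sum_eq_zero_iff_of_nonneg (fun i _ => by positivity)).mp hz
      have h2 : ∀ j ∈ Finset.univ, |A i j - B i j| = 0 :=
        (Finset.sum_eq_zero_iff_of_nonneg (fun j _ => by positivity)).mp
          (h1 i (Finset.mem_univ i))
      have := h2 j (Finset.mem_univ j)
      have := abs_eq_zero.mp this
      linarith
    refine ⟨Set.univ, id, fun i j => hAB i j, ?_⟩
    intro x _
    refine ⟨trivial, fun r _ => by simp, fun r _ hr => ?_, by simp [← h0]⟩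
    simp only [id] at hr ⊢
    have : r = x := by
      have : |r - x| = 0 := by simpa using hr
      have := abs_eq_zero.mp this
      linarith
    linarith
  · -- δ > 0 case
    set s : ℝ := 4 * δ with hs_def
    have hspos : 0 < s := by positivity
    set α : (i : Fin n) → Fin (N i) → ℝ := fun i j => min (A i j) (B i j) with hα
    set β : (i : Fin n) → Fin (N i) → ℝ := fun i j => max (A i j) (B i j) with hβ
    have hℓ : ∀ i j, β i j - α i j = |A i j - B i j| := by
      intro i j
      rw [hα, hβ]
      dsimp only
      rcases le_total (A i j) (B i j) with h | h
      · rw [max_eq_right h, min_eq_left h, abs_of_nonpos (by linarith)]; ring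
      · rw [max_eq_left h, min_eq_right h, abs_of_nonneg (by linarith)]
    have hαβ : ∀ i j, α i j ≤ β i j := fun i j => min_le_max
    have hterm : ∀ i j, β i j - α i j ≤ δ := by
      intro i j
      rw [hℓ i j]
      calc |A i j - B i j| ≤ ∑ j : Fin (N i), |A i j - B i j| :=
            Finset.single_le_sum (f := fun j => |A i j - B i j|)
              (fun j _ => abs_nonneg _) (Finset.mem_univ j)
        _ ≤ ∑ i : Fin n, ∑ j : Fin (N i), |A i j - B i j| :=
            Finset.single_le_sum (f := fun i => ∑ j : Fin (N i), |A i j - B i j|)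
              (fun i _ => by positivity) (Finset.mem_univ i)
        _ ≤ δ := hcost
    set m₁ : (i : Fin n) → Fin (N i) → ℤ := fun i j => ⌊β i j / s⌋ with hm₁
    set Bad : Set ℝ := ⋃ i, ⋃ j,
      (Set.Ioc (α i j - m₁ i j * s) (β i j - m₁ i j * s) ∪
       Set.Ioc (α i j - (m₁ i j - 1) * s) (β i j - (m₁ i j - 1) * s)) with hBad
    have hvol : MeasureTheory.volume Bad ≤ ENNReal.ofReal (2 * δ) := by
      calc MeasureTheory.volume Bad
          ≤ ∑ i : Fin n, MeasureTheory.volume (⋃ j,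
              (Set.Ioc (α i j - m₁ i j * s) (β i j - m₁ i j * s) ∪
               Set.Ioc (α i j - (m₁ i j - 1) * s) (β i j - (m₁ i j - 1) * s))) :=
            MeasureTheory.measure_iUnion_fintype_le _ _
        _ ≤ ∑ i : Fin n, ∑ j : Fin (N i), MeasureTheory.volume
              (Set.Ioc (α i j - m₁ i j * s) (β i j - m₁ i j * s) ∪
               Set.Ioc (α i j - (m₁ i j - 1) * s) (β i j - (m₁ i j - 1) * s)) :=
            Finset.sum_le_sum (fun i _ => MeasureTheory.measure_iUnion_fintype_le _ _)
        _ ≤ ∑ i : Fin n, ∑ j : Fin (N i),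
              (ENNReal.ofReal (β i j - α i j) + ENNReal.ofReal (β i j - α i j)) := by
            refine Finset.sum_le_sum (fun i _ => Finset.sum_le_sum (fun j _ => ?_))
            refine le_trans (MeasureTheory.measure_union_le _ _) ?_
            rw [Real.volume_Ioc, Real.volume_Ioc]
            have e1 : β i j - m₁ i j * s - (α i j - m₁ i j * s) = β i j - α i j := by ring
            have e2 : β i j - (m₁ i j - 1) * s - (α i j - (m₁ i j - 1) * s)
                = β i j - α i j := by ring
            rw [e1, e2]
        _ ≤ ENNReal.ofReal (2 * δ) := by
            have : ∀ i : Fin n, ∀ j : Fin (N i),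
                ENNReal.ofReal (β i j - α i j) + ENNReal.ofReal (β i j - α i j)
                = ENNReal.ofReal (2 * (β i j - α i j)) := by
              intro i j
              rw [← ENNReal.ofReal_add (by linarith [hαβ i j]) (by linarith [hαβ i j])]
              ring_nf
            simp_rw [this]
            have e : ∑ i : Fin n, ∑ j : Fin (N i), ENNReal.ofReal (2 * (β i j - α i j))
                = ENNReal.ofReal (∑ i : Fin n, ∑ j : Fin (N i), 2 * (β i j - α i j)) := by
              rw [ENNReal.ofReal_sum_of_nonneg (fun i _ => Finset.sum_nonneg
                (fun j _ => by linarith [hαβ i j]))]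
              exact Finset.sum_congr rfl (fun i _ =>
                (ENNReal.ofReal_sum_of_nonneg (fun j _ => by linarith [hαβ i j])).symm)
            rw [e]
            apply ENNReal.ofReal_le_ofReal
            have e2 : ∑ i : Fin n, ∑ j : Fin (N i), 2 * (β i j - α i j)
                = 2 * ∑ i : Fin n, ∑ j : Fin (N i), (β i j - α i j) := by
              rw [Finset.mul_sum]
              exact Finset.sum_congr rfl (fun i _ => (Finset.mul_sum _ _ _).symm)
            rw [e2]
            have e3 : ∑ i : Fin n, ∑ j : Fin (N i), (β i j - α i j) ≤ δ := by
              calc ∑ i : Fin n, ∑ j : Fin (N i), (β i j - α i j)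
                  = ∑ i : Fin n, ∑ j : Fin (N i), |A i j - B i j| :=
                    Finset.sum_congr rfl (fun i _ =>
                      Finset.sum_congr rfl (fun j _ => hℓ i j))
                _ ≤ δ := hcost
            linarith
    have hex : ∃ c, c ∈ Set.Ico (0:ℝ) s ∧ c ∉ Bad := by
      by_contra h
      push_neg at h
      have hsub : Set.Ico (0:ℝ) s ⊆ Bad := fun c hc => h c hc
      have hmono := MeasureTheory.measure_mono (μ := MeasureTheory.volume) hsub
      rw [Real.volume_Ico] at hmono
      have hlt : ENNReal.ofReal (2 * δ) < ENNReal.ofReal (s - 0) := by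
        apply ENNReal.ofReal_lt_ofReal_iff_of_nonneg (by linarith) |>.mpr
        rw [hs_def]; linarith
      exact absurd (le_trans hmono hvol) (not_le.mpr hlt)
    obtain ⟨c, ⟨hc0, hcs⟩, hcB⟩ := hex
    have hkey : ∀ i j (m : ℤ), ¬(α i j < c + m * s ∧ c + m * s ≤ β i j) := by
      rintro i j m ⟨h1, h2⟩
      apply hcB
      refine Set.mem_iUnion.mpr ⟨i, Set.mem_iUnion.mpr ⟨j, ?_⟩⟩
      have hm_le : m ≤ m₁ i j := by
        apply Int.le_floor.mpr
        rw [le_div_iff₀ hspos]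
        linarith
      have hm_ge : m₁ i j ≤ m + 1 := by
        have hlen : β i j - α i j ≤ δ := hterm i j
        have hβlt : β i j < ((m : ℝ) + 2) * s := by
          have : α i j < (m + 1 : ℝ) * s := by nlinarith
          nlinarith
        have : β i j / s < ((m + 2 : ℤ) : ℝ) := by
          rw [div_lt_iff₀ hspos]; push_cast; linarith
        have hfl := Int.floor_lt.mpr this
        have hm₁ij : m₁ i j = ⌊β i j / s⌋ := rfl
        omega
      have hcases : m = m₁ i j ∨ m = m₁ i j - 1 := by omega
      rcases hcases with rfl | rfl
      · refine Set.mem_union_left _ ?_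
        rw [Set.mem_Ioc]
        constructor <;> linarith
      · refine Set.mem_union_right _ ?_
        rw [Set.mem_Ioc]
        push_cast at h1 h2 ⊢
        constructor <;> linarith
    have hfloor_ab : ∀ i j, ⌊(α i j - c) / s⌋ = ⌊(β i j - c) / s⌋ := by
      intro i j
      apply aux_floor_eq ((div_le_div_iff_of_pos_right hspos).mpr (by linarith [hαβ i j]))
      rintro m ⟨h1, h2⟩
      apply hkey i j m
      have h1' : α i j - c < (m : ℝ) * s := (div_lt_iff₀ hspos).mp h1
      have h2' : (m : ℝ) * s ≤ β i j - c := (le_div_iff₀ hspos).mp h2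
      constructor <;> linarith
    have hfloorAB : ∀ i j, ⌊(A i j - c) / s⌋ = ⌊(B i j - c) / s⌋ := by
      intro i j
      have hA1 : ⌊(α i j - c) / s⌋ ≤ ⌊(A i j - c) / s⌋ :=
        Int.floor_le_floor ((div_le_div_iff_of_pos_right hspos).mpr
          (by linarith [min_le_left (A i j) (B i j)]))
      have hA2 : ⌊(A i j - c) / s⌋ ≤ ⌊(β i j - c) / s⌋ :=
        Int.floor_le_floor ((div_le_div_iff_of_pos_right hspos).mpr
          (by linarith [le_max_left (A i j) (B i j)]))
      have hB1 : ⌊(α i j - c) / s⌋ ≤ ⌊(B i j - c) / s⌋ :=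
        Int.floor_le_floor ((div_le_div_iff_of_pos_right hspos).mpr
          (by linarith [min_le_right (A i j) (B i j)]))
      have hB2 : ⌊(B i j - c) / s⌋ ≤ ⌊(β i j - c) / s⌋ :=
        Int.floor_le_floor ((div_le_div_iff_of_pos_right hspos).mpr
          (by linarith [le_max_right (A i j) (B i j)]))
      have := hfloor_ab i j
      omega
    refine ⟨{y : ℝ | ∃ m : ℤ, y = c + (m : ℝ) * s + s / 2},
      fun x => c + (⌊(x - c) / s⌋ : ℝ) * s + s / 2, ?_, ?_⟩
    · intro i j
      dsimp only
      rw [hfloorAB i j]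
    · intro x _
      dsimp only
      set u := (x - c) / s with hu
      have hxu : x - c = u * s := by rw [hu]; field_simp
      set k := ⌊u⌋ with hk
      set v := (k : ℝ) + 1 / 2 - u with hv
      have hv1 : -(1 / 2) < v := by
        have := Int.lt_floor_add_one u
        rw [hv]; push_cast at this ⊢; linarith
      have hv2 : v ≤ 1 / 2 := by
        have := Int.floor_le u
        rw [hv]; linarith
      have hπ : c + (k : ℝ) * s + s / 2 - x = v * s := by
        linear_combination -hxu - s * hv
      have habs1 : |c + (k : ℝ) * s + s / 2 - x| = |v| * s := by
        rw [hπ, abs_mul, abs_of_pos hspos]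
      have hrgen : ∀ m : ℤ, c + (m : ℝ) * s + s / 2 - x = (v + ((m - k : ℤ) : ℝ)) * s := by
        intro m
        push_cast
        linear_combination -hxu - s * hv
      have habs2 : ∀ m : ℤ, |c + (m : ℝ) * s + s / 2 - x| = |v + ((m - k : ℤ) : ℝ)| * s := by
        intro m
        rw [hrgen m, abs_mul, abs_of_pos hspos]
      refine ⟨⟨k, rfl⟩, ?_, ?_, ?_⟩
      · rintro r ⟨m, rfl⟩
        rw [habs1, habs2 m]
        exact mul_le_mul_of_nonneg_right (aux_ge hv1 hv2 (m - k)) hspos.le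
      · rintro r ⟨m, rfl⟩ heq
        rw [habs1, habs2 m] at heq
        have hvv : |v + ((m - k : ℤ) : ℝ)| = |v| := mul_right_cancel₀ hspos.ne' heq
        have hmk : m - k ≤ 0 := aux_tie hv1 hv2 hvv
        have hmk' : (m : ℝ) ≤ (k : ℝ) := by exact_mod_cast (by omega : m ≤ k)
        have := mul_le_mul_of_nonneg_right hmk' hspos.le
        linarith
      · rw [habs1, hs_def]
        have hvle : |v| ≤ 1 / 2 := abs_le.mpr ⟨le_of_lt hv1, hv2⟩
        have : |v| * s ≤ (1 / 2) * s :=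
          mul_le_mul_of_nonneg_right hvle hspos.le
        rw [hs_def] at this
        linarith
end
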